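/- Let M be a simplicial complex and D ≤ M a combinatorial d-ball that can be r-starred in M, and let M̃ be the complex obtained from M by this r-starring (replacing the simplices of D not in ∂D by a cone w∂D on a new vertex w). Then M and M̃ are both subcomplexes of N = M ∪ wD, and N is obtained from M̃ by an elementary PL expansion of dimension d+1: N = M̃ ∪ wD where wD is a combinatorial (d+1)-ball and M̃ ∩ wD = w∂D is a combinatorial d-ball. -/

import Mathlib

open Finset
open scoped Classical

/-- An abstract simplicial complex on vertex type `V`: a downward-closed family of
nonempty finite subsets of `V`. -/
structure SComplex (V : Type*) where
  faces : Set (Finset V)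
  not_empty_mem : ∅ ∉ faces
  down_closed : ∀ {s t : Finset V}, s ∈ faces → t ⊆ s → t.Nonempty → t ∈ faces

namespace SComplex

variable {V W : Type*}

/-- The vertex set of a simplicial complex. -/
def vertexSet (K : SComplex V) : Set V := {v | {v} ∈ K.faces}

/-- The geometric realization of a simplicial complex, as the set of convex-combination
coordinate functions supported on a simplex. -/
def realization (K : SComplex V) : Set (V → ℝ) :=
  {x | ∃ σ ∈ K.faces, (∀ v, 0 ≤ x v) ∧ (∀ v, v ∉ σ → x v = 0) ∧ (∑ v ∈ σ, x v) = 1}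

/-- The geometric realization as a topological space. -/
abbrev space (K : SComplex V) : Type _ := ↥(K.realization)

/-- `L` is a subcomplex of `K`. -/
def IsSubcomplex (L K : SComplex V) : Prop := L.faces ⊆ K.faces

/-- A complex is `r`-conic (`r` an integer, possibly `-1`) if every subcomplex with at
most `r` vertices is contained in the closed star of some vertex. -/
def IsConic (K : SComplex V) (r : ℤ) : Prop :=
  ∀ L : SComplex V, L.IsSubcomplex K → L.vertexSet.Finite →
    (L.vertexSet.ncard : ℤ) ≤ r →
    ∃ v ∈ K.vertexSet, ∀ σ ∈ L.faces, insert v σ ∈ K.faces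

/-- The link of a vertex `v` in `K`. -/
def vertexLink (K : SComplex V) (v : V) : Set (Finset V) :=
  {τ ∈ K.faces | v ∉ τ ∧ insert v τ ∈ K.faces}

/-- A nonempty complex is `r`-ample if for every set `U` of at most `r` vertices and
every subcomplex `L` with vertices in `U`, some vertex `v` has a link whose simplices
contained in `U` are exactly those of `L`. -/
def IsAmple (K : SComplex V) (r : ℕ) : Prop :=
  K.faces.Nonempty ∧
  ∀ U : Finset V, ↑U ⊆ K.vertexSet → U.card ≤ r →
    ∀ L : SComplex V, L.IsSubcomplex K → L.vertexSet ⊆ ↑U →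
      ∃ v ∈ K.vertexSet, {τ ∈ K.vertexLink v | ↑τ ⊆ (U : Set V)} = L.faces

end SComplex

/-- A topological space is `n`-connected if it is nonempty and every continuous map
from the `k`-sphere, `0 ≤ k ≤ n`, is null-homotopic. -/
def NConnected (n : ℕ) (X : Type*) [TopologicalSpace X] : Prop :=
  Nonempty X ∧ ∀ k : ℕ, k ≤ n →
    ∀ f : C(Metric.sphere (0 : EuclideanSpace ℝ (Fin (k + 1))) 1, X),
      f.Nullhomotopic

namespace SComplex

variable {V W : Type*}

/-- The affine extension of a vertex assignment `φ : W → (V → ℝ)` to barycentric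
coordinate functions. -/
noncomputable def affMap (φ : W → V → ℝ) (x : W → ℝ) : V → ℝ :=
  fun v => ∑ᶠ w, x w * φ w v

/-- The closed geometric simplex of `K` spanned by the vertices of `σ`. -/
def geomSimplex (K : SComplex V) (σ : Finset V) : Set (V → ℝ) :=
  {x ∈ K.realization | ∀ v, v ∉ σ → x v = 0}

/-- `L` is a (geometric) subdivision of `K` via the vertex placement `φ`: the affine
extension of `φ` maps `|L|` bijectively onto `|K|` and maps each closed simplex of `L`
into a closed simplex of `K`. -/
def IsSubdivisionVia (L : SComplex W) (φ : W → V → ℝ) (K : SComplex V) : Prop :=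
  Set.BijOn (affMap φ) L.realization K.realization ∧
  ∀ σ ∈ L.faces, ∃ τ ∈ K.faces, affMap φ '' L.geomSimplex σ ⊆ K.geomSimplex τ

/-- `f` realizes a simplicial isomorphism from `K` onto `L`. -/
def IsIsoMap (f : V → W) (K : SComplex V) (L : SComplex W) : Prop :=
  Set.InjOn f K.vertexSet ∧
  (∀ σ ∈ K.faces, σ.image f ∈ L.faces) ∧
  (∀ τ ∈ L.faces, ∃ σ ∈ K.faces, σ.image f = τ)

/-- Two simplicial complexes are isomorphic. -/
def Iso (K : SComplex V) (L : SComplex W) : Prop :=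
  ∃ f : V → W, IsIsoMap f K L

/-- Two simplicial complexes are PL homeomorphic if they admit simplicially isomorphic
subdivisions. -/
def PLHomeo (K : SComplex V) (L : SComplex W) : Prop :=
  ∃ (A B : Type) (K' : SComplex A) (L' : SComplex B)
    (φ : A → V → ℝ) (ψ : B → W → ℝ),
      IsSubdivisionVia K' φ K ∧ IsSubdivisionVia L' ψ L ∧ Iso K' L'

end SComplex

/-- The standard `n`-simplex as a simplicial complex: all nonempty subsets of
`Fin (n+1)`. -/
def stdSimplexC (n : ℕ) : SComplex (Fin (n + 1)) where
  faces := {σ | σ.Nonempty}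
  not_empty_mem := by simp [Set.mem_setOf_eq]
  down_closed := fun _ _ h => h

/-- The boundary of the standard simplex on `Fin j`: all nonempty proper subsets.
For `j = m + 2` this is the combinatorial `m`-sphere `∂Δ^{m+1}`; for `j = 1` it is the
empty complex (the `(-1)`-sphere). -/
def boundaryC (j : ℕ) : SComplex (Fin j) where
  faces := {σ | σ.Nonempty ∧ σ ≠ Finset.univ}
  not_empty_mem := by
    rintro ⟨h, -⟩; exact Finset.not_nonempty_empty h
  down_closed := by
    rintro s t ⟨-, hs⟩ hts ht
    refine ⟨ht, fun h => hs ?_⟩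
    subst h
    exact Finset.univ_subset_iff.mp hts

namespace SComplex

variable {V : Type*}

/-- A combinatorial `d`-ball: a complex PL homeomorphic to the standard `d`-simplex. -/
def IsCombBall (d : ℕ) (K : SComplex V) : Prop := K.PLHomeo (stdSimplexC d)

/-- A complex PL homeomorphic to `∂Δ^{j-1}`, i.e. a combinatorial `(j-2)`-sphere. -/
def IsCombSphereAux (j : ℕ) (K : SComplex V) : Prop := K.PLHomeo (boundaryC j)

/-- The link of a simplex `σ` in `K`, as a simplicial complex. -/
def linkC (K : SComplex V) (σ : Finset V) : SComplex V where
  faces := {τ | τ ∈ K.faces ∧ (∀ v ∈ σ, v ∉ τ) ∧ τ ∪ σ ∈ K.faces}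
  not_empty_mem := fun h => K.not_empty_mem h.1
  down_closed := by
    rintro s t ⟨hs, hdisj, huni⟩ hts ht
    refine ⟨K.down_closed hs hts ht, fun v hv hvt => hdisj v hv (hts hvt), ?_⟩
    refine K.down_closed huni (Finset.union_subset_union_left hts) ?_
    exact ht.mono Finset.subset_union_left

/-- A combinatorial (PL) `n`-manifold: the link of every simplex `σ` is a combinatorial
sphere of dimension `n - dim σ - 1` (PL homeomorphic to the boundary of the standard
`(n - dim σ)`-simplex). -/
def IsCombManifold (n : ℕ) (M : SComplex V) : Prop :=
  M.faces.Nonempty ∧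
  ∀ σ ∈ M.faces, (M.linkC σ).IsCombSphereAux (n + 2 - σ.card)

/-- `(D, bD)` is a triangulated `d`-disk: there is a homeomorphism from `|D|` to the
closed unit `d`-ball carrying `|bD|` exactly onto the boundary sphere. -/
def IsTriangulatedDisk (D bD : SComplex V) (d : ℕ) : Prop :=
  bD.IsSubcomplex D ∧
  ∃ e : D.space ≃ₜ (Metric.closedBall (0 : EuclideanSpace ℝ (Fin d)) 1),
    ∀ x : D.space, (x : V → ℝ) ∈ bD.realization ↔
      ((e x : EuclideanSpace ℝ (Fin d)) ∈
        Metric.sphere (0 : EuclideanSpace ℝ (Fin d)) 1)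

/-- The faces of the cone with apex `w` over the family of faces `F`. -/
def coneFaces (w : V) (F : Set (Finset V)) : Set (Finset V) :=
  F ∪ (insert w '' F) ∪ {{w}}

/-- `Mt` is obtained from `M` by starring the triangulated `d`-disk `D` (with boundary
`bD`) at the new vertex `w`: all simplices of `D` not in `bD` are removed and the cone
`w ∂D` is attached. -/
def IsStarringAt (r : ℤ) (M Mt : SComplex V) (D bD : SComplex V) (d : ℕ) (w : V) :
    Prop :=
  D.IsSubcomplex M ∧
  D.vertexSet.Finite ∧ (D.vertexSet.ncard : ℤ) ≤ r ∧
  IsTriangulatedDisk D bD d ∧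
  (∀ σ ∈ M.faces, ∀ τ ∈ D.faces, τ ∉ bD.faces → τ ⊆ σ → σ ∈ D.faces) ∧
  w ∉ M.vertexSet ∧
  Mt.faces = (M.faces \ {τ | τ ∈ D.faces ∧ τ ∉ bD.faces}) ∪ coneFaces w bD.faces

/-- `Mt` is obtained from `M` by an `r`-starring. -/
def IsStarring (r : ℤ) (M Mt : SComplex V) : Prop :=
  ∃ (D bD : SComplex V) (d : ℕ) (w : V), IsStarringAt r M Mt D bD d w

/-- `M` `r`-stars to `L`: `L` is obtained from `M` by a finite sequence of
`r`-starrings. -/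
def StarsTo (r : ℤ) : SComplex V → SComplex V → Prop :=
  Relation.ReflTransGen (IsStarring r)

end SComplex

namespace SComplex

variable {V : Type*}

/-- The cone with apex `w` over the complex `A`, as a simplicial complex. -/
def coneC (w : V) (A : SComplex V) : SComplex V where
  faces := coneFaces w A.faces
  not_empty_mem := by
    rintro ((h | ⟨τ, hτ, h⟩) | h)
    · exact A.not_empty_mem h
    · exact (Finset.insert_ne_empty w τ) h
    · simp only [Set.mem_singleton_iff] at h
      exact (Finset.singleton_ne_empty w) h.symm
  down_closed := by
    rintro s t ((hs | ⟨τ, hτ, rfl⟩) | hs) hts ht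
    · exact Or.inl (Or.inl (A.down_closed hs hts ht))
    · rcases Finset.eq_empty_or_nonempty (t.erase w) with he | he
      · have : t ⊆ {w} := by
          intro x hx
          rcases eq_or_ne x w with rfl | hxw
          · exact Finset.mem_singleton_self x
          · exact absurd (Finset.mem_erase.mpr ⟨hxw, hx⟩) (by simp [he])
        rcases Finset.subset_singleton_iff.mp this with rfl | rfl
        · exact absurd rfl ht.ne_empty
        · exact Or.inr rfl
      · have htτ : t.erase w ⊆ τ := by
          intro x hx
          have hx' := Finset.mem_erase.mp hx
          rcases Finset.mem_insert.mp (hts hx'.2) with h | h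
          · exact absurd h hx'.1
          · exact h
        have hA : t.erase w ∈ A.faces := A.down_closed hτ htτ he
        by_cases hw : w ∈ t
        · exact Or.inl (Or.inr ⟨t.erase w, hA, Finset.insert_erase hw⟩)
        · rw [Finset.erase_eq_self.mpr hw] at hA
          exact Or.inl (Or.inl hA)
    · simp only [Set.mem_singleton_iff] at hs
      subst hs
      rcases Finset.subset_singleton_iff.mp hts with rfl | rfl
      · exact absurd rfl ht.ne_empty
      · exact Or.inr rfl

end SComplex

/-! The face identities are bookkeeping: the new vertex `w` lies in no simplex of `M`. The two
ball statements rest on one geometric fact: if `K'` subdivides `K`, the cone over `K'` subdivides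
every complex whose realization is the geometric cone over `|K|`, the new apex going to the cone
point. `w D` is such a cone over `|D|` (apex the vertex `w`), `Δ^(d+1)` one over `Δ^d` (apex the
last vertex) and `Δ^d` one over `∂Δ^d` (apex the barycenter). Coning the subdivisions of `D` and
of `Δ^d` (resp. of `∂D` and `∂Δ^d`) together with the isomorphism between them shows that `w D`
is a `(d + 1)`-ball and `w ∂D` a `d`-ball. -/

-- The definitions above decide equality by `Classical.propDecidable`; preferring it keeps the
-- `insert` and `image` below syntactically equal to theirs.
attribute [local instance 9999] Classical.propDecidable

theorem smul_add_one_sub_smul_inv_smul_sub {E : Type*} [AddCommGroup E] [Module ℝ E]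
    (p u : E) {t : ℝ} (ht : t ≠ 1) : t • p + (1 - t) • ((1 - t)⁻¹ • (u - t • p)) = u := by
  rw [smul_smul, mul_inv_cancel₀ (sub_ne_zero.mpr ht.symm), one_smul, add_sub_cancel]

namespace SComplex

variable {V W A B : Type*}

theorem faces_injective : Function.Injective (faces : SComplex V → Set (Finset V)) := by
  rintro ⟨F, _, _⟩ ⟨G, _, _⟩ (rfl : F = G)
  rfl

theorem nonneg_of_mem_realization {K : SComplex V} {x : V → ℝ} (hx : x ∈ K.realization)
    (v : V) : 0 ≤ x v :=
  hx.choose_spec.2.1 v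

theorem sum_eq_one_of_mem_realization {K : SComplex V} {x : V → ℝ} (hx : x ∈ K.realization)
    {τ : Finset V} (hτ : ∀ v ∉ τ, x v = 0) : ∑ v ∈ τ, x v = 1 := by
  obtain ⟨σ, -, -, hσ, hsum⟩ := hx
  calc ∑ v ∈ τ, x v = ∑ v ∈ τ ∪ σ, x v := sum_subset subset_union_left fun v _ hv => hτ v hv
    _ = ∑ v ∈ σ, x v := (sum_subset subset_union_right fun v _ hv => hσ v hv).symm
    _ = 1 := hsum

theorem exists_mem_geomSimplex {K : SComplex V} {x : V → ℝ} (hx : x ∈ K.realization) :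
    ∃ σ ∈ K.faces, x ∈ K.geomSimplex σ := by
  obtain ⟨σ, hσ, -, hsupp, -⟩ := id hx
  exact ⟨σ, hσ, hx, hsupp⟩

theorem support_finite_of_mem_realization {K : SComplex V} {x : V → ℝ}
    (hx : x ∈ K.realization) : (Function.support x).Finite := by
  obtain ⟨σ, -, -, hsupp, -⟩ := hx
  exact σ.finite_toSet.subset fun v hv => by_contra fun h => hv (hsupp v h)

theorem apply_eq_zero_of_forall_notMem {K : SComplex V} {w : V} (hw : ∀ σ ∈ K.faces, w ∉ σ)
    {x : V → ℝ} (hx : x ∈ K.realization) : x w = 0 := by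
  obtain ⟨σ, hσ, -, hsupp, -⟩ := hx
  exact hsupp w (hw σ hσ)

theorem notMem_of_notMem_vertexSet {K : SComplex V} {w : V} (hw : w ∉ K.vertexSet)
    {σ : Finset V} (hσ : σ ∈ K.faces) : w ∉ σ := fun hwσ =>
  hw (K.down_closed hσ (singleton_subset_iff.mpr hwσ) (singleton_nonempty w))

theorem geomSimplex_nonempty {K : SComplex V} {σ : Finset V} (hσ : σ ∈ K.faces) :
    (K.geomSimplex σ).Nonempty := by
  have hcard : (σ.card : ℝ) ≠ 0 := by
    have : σ.Nonempty := nonempty_iff_ne_empty.2 fun h => K.not_empty_mem (h ▸ hσ)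
    exact_mod_cast this.card_pos.ne'
  have hsupp : ∀ v ∉ σ, (if v ∈ σ then (σ.card : ℝ)⁻¹ else 0) = 0 := fun v hv => if_neg hv
  refine ⟨fun v => if v ∈ σ then (σ.card : ℝ)⁻¹ else 0, ⟨σ, hσ, fun v => ?_, hsupp, ?_⟩, hsupp⟩
  · dsimp only
    split_ifs <;> positivity
  · dsimp only
    rw [sum_congr rfl fun v hv => if_pos hv, sum_const, nsmul_eq_mul, mul_inv_cancel₀ hcard]

/-- A copy of `K` only when `j` is injective. -/
def map (j : V → W) (K : SComplex V) : SComplex W where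
  faces := image j '' K.faces
  not_empty_mem := by
    rintro ⟨σ, hσ, h⟩
    exact K.not_empty_mem (image_eq_empty.mp h ▸ hσ)
  down_closed := by
    rintro s t ⟨σ, hσ, rfl⟩ hts ht
    obtain ⟨u, hu, rfl⟩ := subset_image_iff.mp hts
    exact ⟨u, K.down_closed hσ hu ht.of_image, rfl⟩

section Map

variable {j : V → W} (hj : Function.Injective j)
include hj

theorem extend_apply_eq_zero {x : V → ℝ} {τ : Finset V} (hx : ∀ v ∉ τ, x v = 0) {w : W}
    (hw : w ∉ τ.image j) : Function.extend j x 0 w = 0 := by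
  by_cases h : ∃ v, j v = w
  · obtain ⟨v, rfl⟩ := h
    rw [hj.extend_apply]
    exact hx v fun hv => hw (mem_image_of_mem j hv)
  · exact Function.extend_apply' _ _ _ h

theorem extend_mem_realization_map {K : SComplex V} {x : V → ℝ} (hx : x ∈ K.realization) :
    Function.extend j x 0 ∈ (K.map j).realization := by
  obtain ⟨σ, hσ, hnn, hsupp, hsum⟩ := hx
  refine ⟨σ.image j, ⟨σ, hσ, rfl⟩, fun w => ?_, fun w => extend_apply_eq_zero hj hsupp, ?_⟩
  · by_cases h : ∃ v, j v = w
    · obtain ⟨v, rfl⟩ := h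
      rw [hj.extend_apply]
      exact hnn v
    · rw [Function.extend_apply' _ _ _ h]
      exact le_rfl
  · rwa [sum_image fun a _ b _ hab => hj hab, sum_congr rfl fun v _ => hj.extend_apply x 0 v]

theorem realization_map (K : SComplex V) :
    (K.map j).realization = (Function.extend j · (0 : W → ℝ)) '' K.realization := by
  refine subset_antisymm ?_ (Set.image_subset_iff.mpr fun x => extend_mem_realization_map hj)
  rintro x ⟨_, ⟨σ, hσ, rfl⟩, hnn, hsupp, hsum⟩
  have hsupp' : ∀ v ∉ σ, x (j v) = 0 := fun v hv =>
    hsupp _ fun h => hv (hj.mem_finset_image.mp h)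
  refine ⟨x ∘ j, ⟨σ, hσ, fun v => hnn _, hsupp', ?_⟩, funext fun w => ?_⟩
  · rwa [sum_image fun a _ b _ hab => hj hab] at hsum
  · show Function.extend j (x ∘ j) 0 w = x w
    by_cases h : ∃ v, j v = w
    · obtain ⟨v, rfl⟩ := h
      exact hj.extend_apply _ _ v
    · rw [Function.extend_apply' _ _ _ h]
      exact (hsupp w fun hw => h ((mem_image.mp hw).imp fun v hv => hv.2)).symm

theorem affMap_extend (ψ : B → V → ℝ) (x : B → ℝ) :
    affMap (fun b => Function.extend j (ψ b) 0) x = Function.extend j (affMap ψ x) 0 := by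
  funext w
  by_cases h : ∃ v, j v = w
  · obtain ⟨v, rfl⟩ := h
    simp only [affMap, hj.extend_apply]
  · simp only [affMap, Function.extend_apply' _ _ _ h, Pi.zero_apply, mul_zero, finsum_zero]

theorem IsSubdivisionVia.map {L : SComplex B} {ψ : B → V → ℝ} {K : SComplex V}
    (h : L.IsSubdivisionVia ψ K) :
    L.IsSubdivisionVia (fun b => Function.extend j (ψ b) 0) (K.map j) := by
  have hinj : Function.Injective (Function.extend j · (0 : W → ℝ)) :=
    fun x y hxy => funext fun v => by simpa only [hj.extend_apply] using congrFun hxy (j v)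
  refine ⟨?_, fun σ hσ => ?_⟩
  · rw [realization_map hj,
      show affMap _ = (Function.extend j · (0 : W → ℝ)) ∘ affMap ψ from
        funext (affMap_extend hj ψ)]
    exact (hinj.injOn.bijOn_image).comp h.1
  · obtain ⟨τ, hτ, himg⟩ := h.2 σ hσ
    refine ⟨τ.image j, ⟨τ, hτ, rfl⟩, ?_⟩
    rintro _ ⟨y, hy, rfl⟩
    obtain ⟨hz, hzτ⟩ := himg ⟨y, hy, rfl⟩
    rw [affMap_extend hj]
    exact ⟨extend_mem_realization_map hj hz, fun w => extend_apply_eq_zero hj hzτ⟩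

end Map

theorem mem_geomSimplex_of_sum_eq_one {K : SComplex V} {σ : Finset V} (hσ : σ ∈ K.faces)
    {x : V → ℝ} (hnn : ∀ v, 0 ≤ x v) (hsupp : ∀ v ∉ σ, x v = 0) (hsum : ∑ v ∈ σ, x v = 1) :
    x ∈ K.geomSimplex σ :=
  ⟨⟨σ, hσ, hnn, hsupp, hsum⟩, hsupp⟩

theorem exists_subset_insert_of_mem_coneC {K : SComplex V} {w : V} {σ : Finset V}
    (hσ : σ ∈ (coneC w K).faces) : ∃ τ, (τ ∈ K.faces ∨ τ = ∅) ∧ σ ⊆ insert w τ := by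
  rcases hσ with (hσ | ⟨τ, hτ, rfl⟩) | rfl
  · exact ⟨σ, Or.inl hσ, subset_insert _ _⟩
  · exact ⟨τ, Or.inl hτ, subset_rfl⟩
  · exact ⟨∅, Or.inr rfl, by simp⟩

/-- `|C|` is the cone with apex `p` over `|K|`, every segment from `p` to a simplex of `K` lying
in a simplex of `C`; `h` reads off the position along those segments. -/
structure IsGeomCone (K C : SComplex V) (p : V → ℝ) (h : (V → ℝ) → ℝ) : Prop where
  apex_mem : p ∈ C.realization
  exists_join_subset : ∀ τ ∈ K.faces, ∃ ρ ∈ C.faces, ∀ t ∈ Set.Icc (0 : ℝ) 1,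
    ∀ z ∈ K.geomSimplex τ, t • p + (1 - t) • z ∈ C.geomSimplex ρ
  eq_apex_or_join : ∀ u ∈ C.realization,
    u = p ∨ ∃ t ∈ Set.Ico (0 : ℝ) 1, ∃ z ∈ K.realization, u = t • p + (1 - t) • z
  height_apex : h p = 1
  height_join : ∀ t ∈ Set.Icc (0 : ℝ) 1, ∀ z ∈ K.realization, h (t • p + (1 - t) • z) = t

theorem IsGeomCone.join_mem {K C : SComplex V} {p : V → ℝ} {h : (V → ℝ) → ℝ}
    (hC : IsGeomCone K C p h) {t : ℝ} (ht : t ∈ Set.Icc (0 : ℝ) 1) {z : V → ℝ}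
    (hz : z ∈ K.realization) : t • p + (1 - t) • z ∈ C.realization := by
  obtain ⟨τ, hτ, hzτ⟩ := exists_mem_geomSimplex hz
  obtain ⟨ρ, -, hρ⟩ := hC.exists_join_subset τ hτ
  exact (hρ t ht z hzτ).1

section FreshApex

variable {K : SComplex V} {w : V} (hw : ∀ σ ∈ K.faces, w ∉ σ)
include hw

theorem eq_single_or_join_of_mem_coneC {u : V → ℝ} (hu : u ∈ (coneC w K).realization) :
    u = Pi.single w 1 ∨ ∃ t ∈ Set.Ico (0 : ℝ) 1, ∃ z ∈ K.realization,
      u = t • Pi.single w 1 + (1 - t) • z := by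
  obtain ⟨σ, hσ, hnn, hsupp, -⟩ := id hu
  obtain ⟨τ, hτ, hστ⟩ := exists_subset_insert_of_mem_coneC hσ
  have hwτ : w ∉ τ := by rcases hτ with hτ | rfl; exacts [hw τ hτ, notMem_empty w]
  have hτsupp : ∀ v ∉ insert w τ, u v = 0 := fun v hv => hsupp v fun h => hv (hστ h)
  have hsum : u w + ∑ v ∈ τ, u v = 1 := by
    rw [← sum_insert hwτ]
    exact sum_eq_one_of_mem_realization hu hτsupp
  have hτnn : 0 ≤ ∑ v ∈ τ, u v := sum_nonneg fun v _ => hnn v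
  have hvw : ∀ v ∈ τ, v ≠ w := fun v hv h => hwτ (h ▸ hv)
  by_cases ht : u w = 1
  · left
    have hzero : ∀ v ∈ τ, u v = 0 :=
      (sum_eq_zero_iff_of_nonneg fun v _ => hnn v).mp (by linarith)
    funext v
    by_cases hv : v = w
    · subst hv
      simpa using ht
    · rw [Pi.single_eq_of_ne hv]
      by_cases hvτ : v ∈ τ
      exacts [hzero v hvτ, hτsupp v (by simp [hv, hvτ])]
  · right
    have h1t : 0 < 1 - u w := sub_pos.mpr (lt_of_le_of_ne (by linarith) ht)
    have hτ' : τ ∈ K.faces := hτ.resolve_right fun h => ht (by simpa [h] using hsum)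
    refine ⟨u w, ⟨hnn w, by linarith⟩, _, ⟨τ, hτ', fun v => ?_, fun v hv => ?_, ?_⟩,
      (smul_add_one_sub_smul_inv_smul_sub _ u ht).symm⟩
    · by_cases hv : v = w
      · simp [hv]
      · simpa [Pi.single_eq_of_ne hv] using mul_nonneg (inv_nonneg.mpr h1t.le) (hnn v)
    · by_cases hv' : v = w
      · simp [hv']
      · simp [Pi.single_eq_of_ne hv', hτsupp v (by simp [hv', hv])]
    · simp only [Pi.smul_apply, Pi.sub_apply, smul_eq_mul]
      rw [← mul_sum, sum_congr rfl fun v hv => by rw [Pi.single_eq_of_ne (hvw v hv), mul_zero,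
        sub_zero], show ∑ v ∈ τ, u v = 1 - u w by linarith, inv_mul_cancel₀ h1t.ne']

theorem join_mem_geomSimplex_coneC {τ : Finset V} (hτ : τ ∈ K.faces) {t : ℝ}
    (ht : t ∈ Set.Icc (0 : ℝ) 1) {z : V → ℝ} (hz : z ∈ K.geomSimplex τ) :
    t • Pi.single w 1 + (1 - t) • z ∈ (coneC w K).geomSimplex (insert w τ) := by
  have hwτ := hw τ hτ
  have hzw : z w = 0 := hz.2 w hwτ
  refine mem_geomSimplex_of_sum_eq_one (Or.inl (Or.inr ⟨τ, hτ, rfl⟩)) (fun v => ?_)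
    (fun v hv => ?_) ?_
  · have : 0 ≤ (Pi.single w 1 : V → ℝ) v := by by_cases hv : v = w <;> simp [hv]
    simp only [Pi.add_apply, Pi.smul_apply, smul_eq_mul]
    exact add_nonneg (mul_nonneg ht.1 this)
      (mul_nonneg (sub_nonneg.mpr ht.2) (nonneg_of_mem_realization hz.1 v))
  · rw [mem_insert, not_or] at hv
    simp [Pi.single_eq_of_ne hv.1, hz.2 v hv.2]
  · have hτsum : ∑ v ∈ τ, (t • Pi.single w 1 + (1 - t) • z : V → ℝ) v = 1 - t := by
      simp only [Pi.add_apply, Pi.smul_apply, smul_eq_mul]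
      rw [sum_congr rfl fun v hv => by
          rw [Pi.single_eq_of_ne (ne_of_mem_of_not_mem hv hwτ), mul_zero, zero_add],
        ← mul_sum, sum_eq_one_of_mem_realization hz.1 hz.2, mul_one]
    rw [sum_insert hwτ, hτsum]
    simp [hzw]

theorem isGeomCone_coneC : IsGeomCone K (coneC w K) (Pi.single w 1) (fun u => u w) where
  apex_mem := (mem_geomSimplex_of_sum_eq_one (Or.inr rfl)
    (fun v => by by_cases hv : v = w <;> simp [hv])
    (fun v hv => Pi.single_eq_of_ne (notMem_singleton.mp hv) _) (by simp)).1
  exists_join_subset τ hτ :=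
    ⟨insert w τ, Or.inl (Or.inr ⟨τ, hτ, rfl⟩), fun _ ht _ hz =>
      join_mem_geomSimplex_coneC hw hτ ht hz⟩
  eq_apex_or_join _ hu := eq_single_or_join_of_mem_coneC hw hu
  height_apex := by simp
  height_join t _ z hz := by simp [apply_eq_zero_of_forall_notMem hw hz]

end FreshApex

def cone (K : SComplex A) : SComplex (Option A) := coneC none (K.map some)

/-- Barycentric coordinates in `K.cone` of `t • apex + (1 - t) • y`, for `y ∈ |K|`. -/
def coneCoords (t : ℝ) (y : A → ℝ) : Option A → ℝ := fun o => o.elim t fun a => (1 - t) * y a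

theorem coneCoords_eq (t : ℝ) (y : A → ℝ) :
    coneCoords t y = t • Pi.single none 1 + (1 - t) • Function.extend some y 0 := by
  funext o
  rcases o with _ | a
  · simp [coneCoords, Function.extend_apply']
  · simp [coneCoords, (Option.some_injective A).extend_apply]

section Cone

variable {K : SComplex A}

theorem none_notMem_of_mem_map {σ : Finset (Option A)} (hσ : σ ∈ (K.map some).faces) :
    none ∉ σ := by
  obtain ⟨τ, -, rfl⟩ := hσ
  simp

theorem single_none_mem_cone : Pi.single none 1 ∈ K.cone.realization :=
  (isGeomCone_coneC fun _ => none_notMem_of_mem_map).apex_mem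

theorem coneCoords_mem {t : ℝ} (ht : t ∈ Set.Icc (0 : ℝ) 1) {y : A → ℝ}
    (hy : y ∈ K.realization) : coneCoords t y ∈ K.cone.realization := by
  rw [coneCoords_eq]
  exact (isGeomCone_coneC fun σ => none_notMem_of_mem_map).join_mem ht
    (extend_mem_realization_map (Option.some_injective A) hy)

theorem eq_single_or_coneCoords {x : Option A → ℝ} (hx : x ∈ K.cone.realization) :
    x = Pi.single none 1 ∨ ∃ t ∈ Set.Ico (0 : ℝ) 1, ∃ y ∈ K.realization,
      x = coneCoords t y := by
  refine (eq_single_or_join_of_mem_coneC (fun σ => none_notMem_of_mem_map) hx).imp_right ?_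
  rintro ⟨t, ht, z, hz, rfl⟩
  rw [realization_map (Option.some_injective A)] at hz
  obtain ⟨y, hy, rfl⟩ := hz
  exact ⟨t, ht, y, hy, (coneCoords_eq t y).symm⟩

theorem eq_single_or_coneCoords_of_support {x : Option A → ℝ}
    (hx : x ∈ K.cone.realization) {τ : Finset A} (hxτ : ∀ a ∉ τ, x (some a) = 0) :
    x = Pi.single none 1 ∨ ∃ t ∈ Set.Ico (0 : ℝ) 1, ∃ y ∈ K.geomSimplex τ,
      x = coneCoords t y := by
  refine (eq_single_or_coneCoords hx).imp_right ?_
  rintro ⟨t, ht, y, hy, rfl⟩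
  refine ⟨t, ht, y, ⟨hy, fun a ha => ?_⟩, rfl⟩
  exact (mul_eq_zero.mp (hxτ a ha)).resolve_left (sub_pos.mpr ht.2).ne'

end Cone

section AffMap

variable (p : V → ℝ) (φ : A → V → ℝ)

theorem affMap_single_none : affMap (fun o => o.elim p φ) (Pi.single none 1) = p := by
  funext v
  rw [affMap, finsum_option (by simp [Function.comp_def, Function.HasFiniteSupport])]
  simp

theorem affMap_coneCoords (t : ℝ) {y : A → ℝ} (hy : (Function.support y).Finite) :
    affMap (fun o => o.elim p φ) (coneCoords t y) = t • p + (1 - t) • affMap φ y := by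
  funext v
  rw [affMap, finsum_option (hy.subset fun a ha => ?_)]
  · simp [coneCoords, affMap, mul_finsum, mul_assoc]
  · simp only [Function.mem_support, Function.comp_apply, coneCoords, Option.elim_some] at ha ⊢
    exact right_ne_zero_of_mul (left_ne_zero_of_mul ha)

end AffMap

namespace IsGeomCone

variable {K' : SComplex A} {φ : A → V → ℝ} {K C : SComplex V} {p : V → ℝ}
  {h : (V → ℝ) → ℝ} (hsub : K'.IsSubdivisionVia φ K) (hC : IsGeomCone K C p h)
include hsub hC

theorem height_affMap {x : Option A → ℝ} (hx : x ∈ K'.cone.realization) :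
    h (affMap (fun o => o.elim p φ) x) = x none := by
  rcases eq_single_or_coneCoords hx with rfl | ⟨t, ht, y, hy, rfl⟩
  · rw [affMap_single_none, hC.height_apex, Pi.single_eq_same]
  · rw [affMap_coneCoords _ _ _ (support_finite_of_mem_realization hy)]
    exact hC.height_join t (Set.Ico_subset_Icc_self ht) _ (hsub.1.mapsTo hy)

theorem mapsTo_affMap :
    Set.MapsTo (affMap (fun o => o.elim p φ)) K'.cone.realization C.realization := by
  intro x hx
  rcases eq_single_or_coneCoords hx with rfl | ⟨t, ht, y, hy, rfl⟩
  · rw [affMap_single_none]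
    exact hC.apex_mem
  · rw [affMap_coneCoords _ _ _ (support_finite_of_mem_realization hy)]
    exact hC.join_mem (Set.Ico_subset_Icc_self ht) (hsub.1.mapsTo hy)

theorem injOn_affMap :
    Set.InjOn (affMap (fun o => o.elim p φ)) K'.cone.realization := by
  intro x hx x' hx' hxx'
  have hnone : x none = x' none := by
    rw [← hC.height_affMap hsub hx, ← hC.height_affMap hsub hx', hxx']
  rcases eq_single_or_coneCoords hx with rfl | ⟨t, ht, y, hy, rfl⟩ <;>
    rcases eq_single_or_coneCoords hx' with rfl | ⟨t', ht', y', hy', rfl⟩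
  · rfl
  · exact absurd hnone (by simpa [coneCoords] using ht'.2.ne')
  · exact absurd hnone (by simpa [coneCoords] using ht.2.ne)
  · obtain rfl : t = t' := hnone
    rw [affMap_coneCoords _ _ _ (support_finite_of_mem_realization hy),
      affMap_coneCoords _ _ _ (support_finite_of_mem_realization hy')] at hxx'
    have hyy' : affMap φ y = affMap φ y' :=
      smul_right_injective _ (sub_pos.mpr ht.2).ne' (add_left_cancel hxx')
    rw [hsub.1.injOn hy hy' hyy']

theorem surjOn_affMap :
    Set.SurjOn (affMap (fun o => o.elim p φ)) K'.cone.realization C.realization := by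
  intro u hu
  rcases hC.eq_apex_or_join u hu with rfl | ⟨t, ht, z, hz, rfl⟩
  · exact ⟨Pi.single none 1, single_none_mem_cone, affMap_single_none _ _⟩
  · obtain ⟨y, hy, rfl⟩ := hsub.1.surjOn hz
    refine ⟨coneCoords t y, coneCoords_mem (Set.Ico_subset_Icc_self ht) hy, ?_⟩
    exact affMap_coneCoords _ _ _ (support_finite_of_mem_realization hy)

theorem exists_image_geomSimplex_subset {σ : Finset (Option A)} (hσ : σ ∈ K'.cone.faces) :
    ∃ ρ ∈ C.faces,
      affMap (fun o => o.elim p φ) '' K'.cone.geomSimplex σ ⊆ C.geomSimplex ρ := by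
  obtain ⟨_, ⟨τ, hτ, rfl⟩ | rfl, hστ⟩ := exists_subset_insert_of_mem_coneC hσ
  · obtain ⟨ρK, hρK, himg⟩ := hsub.2 τ hτ
    obtain ⟨ρ, hρ, hjoin⟩ := hC.exists_join_subset ρK hρK
    refine ⟨ρ, hρ, ?_⟩
    rintro _ ⟨x, hx, rfl⟩
    rcases eq_single_or_coneCoords_of_support hx.1 (τ := τ)
      (fun a ha => hx.2 _ fun h => by simpa [ha] using hστ h) with rfl | ⟨t, ht, y, hy, rfl⟩
    · obtain ⟨z, hz⟩ := geomSimplex_nonempty hρK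
      simpa [affMap_single_none] using hjoin 1 (by simp) z hz
    · rw [affMap_coneCoords _ _ _ (support_finite_of_mem_realization hy.1)]
      exact hjoin t (Set.Ico_subset_Icc_self ht) _ (himg ⟨y, hy, rfl⟩)
  · obtain ⟨ρ, hρ, hpρ⟩ := exists_mem_geomSimplex hC.apex_mem
    refine ⟨ρ, hρ, ?_⟩
    rintro _ ⟨x, hx, rfl⟩
    rcases eq_single_or_coneCoords_of_support hx.1 (τ := ∅)
      (fun a _ => hx.2 _ fun h => by simpa using hστ h) with rfl | ⟨t, -, y, hy, -⟩
    · rwa [affMap_single_none]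
    · simpa using sum_eq_one_of_mem_realization hy.1 hy.2

end IsGeomCone

theorem IsSubdivisionVia.cone {K' : SComplex A} {φ : A → V → ℝ} {K C : SComplex V}
    {p : V → ℝ} {h : (V → ℝ) → ℝ} (hsub : K'.IsSubdivisionVia φ K) (hC : IsGeomCone K C p h) :
    K'.cone.IsSubdivisionVia (fun o => o.elim p φ) C :=
  ⟨⟨hC.mapsTo_affMap hsub, hC.injOn_affMap hsub, hC.surjOn_affMap hsub⟩,
    fun _ hσ => hC.exists_image_geomSimplex_subset hsub hσ⟩

section BoundaryCone

variable {d : ℕ}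

theorem mem_realization_stdSimplexC {u : Fin (d + 1) → ℝ} :
    u ∈ (stdSimplexC d).realization ↔ (∀ v, 0 ≤ u v) ∧ ∑ v, u v = 1 := by
  refine ⟨fun hu => ⟨nonneg_of_mem_realization hu,
    sum_eq_one_of_mem_realization hu fun v hv => absurd (mem_univ v) hv⟩, fun hu => ?_⟩
  exact ⟨univ, univ_nonempty, hu.1, fun v hv => absurd (mem_univ v) hv, hu.2⟩

theorem mem_geomSimplex_univ_stdSimplexC {u : Fin (d + 1) → ℝ} (hnn : ∀ v, 0 ≤ u v)
    (hsum : ∑ v, u v = 1) : u ∈ (stdSimplexC d).geomSimplex univ :=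
  ⟨mem_realization_stdSimplexC.mpr ⟨hnn, hsum⟩, fun v hv => absurd (mem_univ v) hv⟩

theorem exists_eq_zero_of_mem_realization_boundaryC {z : Fin (d + 1) → ℝ}
    (hz : z ∈ (boundaryC (d + 1)).realization) : ∃ v, z v = 0 := by
  obtain ⟨σ, ⟨-, hσ⟩, -, hsupp, -⟩ := hz
  obtain ⟨v, hv⟩ := not_forall.mp fun h => hσ (eq_univ_iff_forall.mpr h)
  exact ⟨v, hsupp v hv⟩

theorem add_one_mul_inv_add_one : ((d : ℝ) + 1) * ((d : ℝ) + 1)⁻¹ = 1 :=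
  mul_inv_cancel₀ (by positivity)

theorem sum_const_inv_add_one : ∑ _v : Fin (d + 1), ((d : ℝ) + 1)⁻¹ = 1 := by
  simp [add_one_mul_inv_add_one]

theorem eq_barycenter_or_join_of_mem_stdSimplexC {u : Fin (d + 1) → ℝ}
    (hu : u ∈ (stdSimplexC d).realization) :
    u = (fun _ => ((d : ℝ) + 1)⁻¹) ∨ ∃ t ∈ Set.Ico (0 : ℝ) 1,
      ∃ z ∈ (boundaryC (d + 1)).realization, u = t • (fun _ => ((d : ℝ) + 1)⁻¹) + (1 - t) • z := by
  obtain ⟨hnn, hsum⟩ := mem_realization_stdSimplexC.mp hu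
  obtain ⟨v₀, -, hv₀⟩ := exists_mem_eq_inf' univ_nonempty u
  set m := univ.inf' univ_nonempty u
  set t := ((d : ℝ) + 1) * m
  have hm : ∀ v, m ≤ u v := fun v => inf'_le u (mem_univ v)
  have htm : t * ((d : ℝ) + 1)⁻¹ = m := by rw [mul_right_comm, add_one_mul_inv_add_one, one_mul]
  have hsum_sub : ∑ v, (u v - m) = 1 - t := by simp [sum_sub_distrib, hsum, t]
  have ht1 : t ≤ 1 := sub_nonneg.mp (hsum_sub ▸ sum_nonneg fun v _ => sub_nonneg.mpr (hm v))
  by_cases ht : t = 1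
  · left
    have hzero := (sum_eq_zero_iff_of_nonneg fun v _ => sub_nonneg.mpr (hm v)).mp
      (by rw [hsum_sub, ht, sub_self])
    have hmc : m = ((d : ℝ) + 1)⁻¹ := by rw [← htm, ht, one_mul]
    funext v
    rw [← hmc, ← sub_eq_zero]
    exact hzero v (mem_univ v)
  · right
    have h1t : 0 < 1 - t := sub_pos.mpr (lt_of_le_of_ne ht1 ht)
    set z := (1 - t)⁻¹ • (u - t • fun _ => ((d : ℝ) + 1)⁻¹)
    have hz : ∀ v, z v = (1 - t)⁻¹ * (u v - m) := fun v => by simp [z, htm]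
    have hzv₀ : z v₀ = 0 := by rw [hz, ← hv₀, sub_self, mul_zero]
    have hzsum : ∑ v ∈ univ.erase v₀, z v = 1 := by
      rw [sum_erase _ hzv₀, sum_congr rfl fun v _ => hz v, ← mul_sum, hsum_sub,
        inv_mul_cancel₀ h1t.ne']
    refine ⟨t, ⟨mul_nonneg (by positivity) (hv₀ ▸ hnn v₀), lt_of_le_of_ne ht1 ht⟩, z,
      ⟨univ.erase v₀, ⟨nonempty_of_sum_ne_zero (hzsum ▸ one_ne_zero), ?_⟩, fun v => ?_,
        fun v hv => ?_, hzsum⟩, (smul_add_one_sub_smul_inv_smul_sub _ u ht).symm⟩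
    · exact (erase_ssubset (mem_univ v₀)).ne
    · rw [hz]
      exact mul_nonneg (inv_nonneg.mpr h1t.le) (sub_nonneg.mpr (hm v))
    · rwa [of_not_not fun h => hv (mem_erase.mpr ⟨h, mem_univ v⟩)]

/-- The position of `u` on the segment from the barycenter to `∂Δ^d` is `(d + 1) · min u`,
because points of `∂Δ^d` have a vanishing coordinate. -/
theorem isGeomCone_boundaryC_stdSimplexC :
    IsGeomCone (boundaryC (d + 1)) (stdSimplexC d) (fun _ => ((d : ℝ) + 1)⁻¹)
      (fun u => ((d : ℝ) + 1) * univ.inf' univ_nonempty u) where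
  apex_mem := mem_realization_stdSimplexC.mpr ⟨fun _ => by positivity, sum_const_inv_add_one⟩
  exists_join_subset τ _ := by
    refine ⟨univ, univ_nonempty, fun t ht z hz => mem_geomSimplex_univ_stdSimplexC
      (fun v => ?_) ?_⟩
    · simp only [Pi.add_apply, Pi.smul_apply, smul_eq_mul]
      exact add_nonneg (mul_nonneg ht.1 (by positivity))
        (mul_nonneg (sub_nonneg.mpr ht.2) (nonneg_of_mem_realization hz.1 v))
    · have hzsum := sum_eq_one_of_mem_realization hz.1 fun v hv => absurd (mem_univ v) hv
      simp only [Pi.add_apply, Pi.smul_apply, smul_eq_mul]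
      rw [sum_add_distrib, ← mul_sum, ← mul_sum, sum_const_inv_add_one, hzsum]
      ring
  eq_apex_or_join _ hu := eq_barycenter_or_join_of_mem_stdSimplexC hu
  height_apex := by simp [add_one_mul_inv_add_one]
  height_join t ht z hz := by
    obtain ⟨v₀, hv₀⟩ := exists_eq_zero_of_mem_realization_boundaryC hz
    have hinf : univ.inf' univ_nonempty (t • (fun _ => ((d : ℝ) + 1)⁻¹) + (1 - t) • z) =
        t * ((d : ℝ) + 1)⁻¹ := by
      refine le_antisymm ((inf'_le _ (mem_univ v₀)).trans_eq (by simp [hv₀]))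
        (le_inf' _ _ fun v _ => ?_)
      simpa using mul_nonneg (sub_nonneg.mpr ht.2) (nonneg_of_mem_realization hz v)
    rw [hinf, mul_left_comm, add_one_mul_inv_add_one, mul_one]

end BoundaryCone

theorem stdSimplexC_succ_eq_coneC (d : ℕ) :
    stdSimplexC (d + 1) = coneC (Fin.last (d + 1)) ((stdSimplexC d).map Fin.castSucc) := by
  apply faces_injective
  ext σ
  refine ⟨fun hσ => ?_, ?_⟩
  · set τ := univ.filter fun i : Fin (d + 1) => i.castSucc ∈ σ
    have hτ : τ.image Fin.castSucc = σ.erase (Fin.last _) := by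
      ext x
      cases x using Fin.lastCases <;> simp [τ, Fin.castSucc_ne_last]
    by_cases hlast : Fin.last _ ∈ σ
    · rcases τ.eq_empty_or_nonempty with h | h
      · rw [h, image_empty, eq_comm, erase_eq_empty_iff] at hτ
        exact Or.inr (hτ.resolve_left hσ.ne_empty)
      · exact Or.inl (Or.inr ⟨_, ⟨τ, h, rfl⟩, by rw [hτ, insert_erase hlast]⟩)
    · rw [erase_eq_of_notMem hlast] at hτ
      have hτne : (τ.image Fin.castSucc).Nonempty := hτ ▸ hσ
      exact Or.inl (Or.inl ⟨τ, hτne.of_image, hτ⟩)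
  · rintro ((⟨τ, hτ, rfl⟩ | ⟨_, ⟨τ, -, rfl⟩, rfl⟩) | rfl)
    · exact Nonempty.image hτ _
    · exact insert_nonempty _ _
    · exact singleton_nonempty _

theorem exists_cone_subdivision_stdSimplexC {d : ℕ} {L : SComplex B}
    {ψ : B → Fin (d + 1) → ℝ} (hL : L.IsSubdivisionVia ψ (stdSimplexC d)) :
    ∃ ψ' : Option B → Fin (d + 2) → ℝ, L.cone.IsSubdivisionVia ψ' (stdSimplexC (d + 1)) := by
  have hlast : ∀ σ ∈ ((stdSimplexC d).map Fin.castSucc).faces, Fin.last (d + 1) ∉ σ := by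
    rintro _ ⟨τ, -, rfl⟩
    simp [Fin.castSucc_ne_last]
  rw [stdSimplexC_succ_eq_coneC]
  exact ⟨_, (hL.map (Fin.castSucc_injective _)).cone (isGeomCone_coneC hlast)⟩

theorem image_some_mem_cone_iff {K : SComplex A} {τ : Finset A} :
    τ.image some ∈ K.cone.faces ↔ τ ∈ K.faces := by
  refine ⟨?_, fun hτ => Or.inl (Or.inl ⟨τ, hτ, rfl⟩)⟩
  rintro ((⟨τ', hτ', h⟩ | ⟨_, -, h⟩) | h)
  · rwa [← image_injective (Option.some_injective A) h]
  · simpa using congrArg (none ∈ ·) h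
  · simpa using congrArg (none ∈ ·) h

theorem image_image_some_optionMap (f : A → B) (τ : Finset A) :
    (τ.image some).image (Option.map f) = (τ.image f).image some := by
  simp [image_image, Function.comp_def]

theorem IsIsoMap.cone {K : SComplex A} {L : SComplex B} {f : A → B} (hf : IsIsoMap f K L) :
    IsIsoMap (Option.map f) K.cone L.cone := by
  have hvert : ∀ {a}, some a ∈ K.cone.vertexSet → a ∈ K.vertexSet := fun ha =>
    image_some_mem_cone_iff.mp (by rwa [image_singleton])
  refine ⟨?_, ?_, ?_⟩
  · rintro (_ | a) ha (_ | a') ha' h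
    · rfl
    · simp at h
    · simp at h
    · simpa using hf.1 (hvert ha) (hvert ha') (Option.some_injective B h)
  · rintro _ ((⟨τ, hτ, rfl⟩ | ⟨_, ⟨τ, hτ, rfl⟩, rfl⟩) | rfl)
    · rw [image_image_some_optionMap]
      exact Or.inl (Or.inl ⟨_, hf.2.1 τ hτ, rfl⟩)
    · rw [image_insert, image_image_some_optionMap]
      exact Or.inl (Or.inr ⟨_, ⟨_, hf.2.1 τ hτ, rfl⟩, rfl⟩)
    · exact Or.inr (image_singleton _ _)
  · rintro _ ((⟨ρ, hρ, rfl⟩ | ⟨_, ⟨ρ, hρ, rfl⟩, rfl⟩) | rfl)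
    · obtain ⟨τ, hτ, rfl⟩ := hf.2.2 ρ hρ
      exact ⟨τ.image some, Or.inl (Or.inl ⟨τ, hτ, rfl⟩), image_image_some_optionMap f τ⟩
    · obtain ⟨τ, hτ, rfl⟩ := hf.2.2 ρ hρ
      refine ⟨insert none (τ.image some), Or.inl (Or.inr ⟨_, ⟨τ, hτ, rfl⟩, rfl⟩), ?_⟩
      rw [image_insert, image_image_some_optionMap]
      rfl
    · exact ⟨{none}, Or.inr rfl, image_singleton _ _⟩

theorem PLHomeo.coneC {X : Type*} {K : SComplex V} {L : SComplex W} {T : SComplex X}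
    (hKL : K.PLHomeo L) {w : V} (hw : ∀ σ ∈ K.faces, w ∉ σ)
    (hT : ∀ (B : Type) (L' : SComplex B) (ψ : B → W → ℝ), L'.IsSubdivisionVia ψ L →
      ∃ ψ' : Option B → X → ℝ, L'.cone.IsSubdivisionVia ψ' T) :
    (coneC w K).PLHomeo T := by
  obtain ⟨A, B, K', L', φ, ψ, hK', hL', f, hf⟩ := hKL
  obtain ⟨ψ', hψ'⟩ := hT B L' ψ hL'
  exact ⟨Option A, Option B, K'.cone, L'.cone, _, ψ', hK'.cone (isGeomCone_coneC hw), hψ',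
    Option.map f, hf.cone⟩

theorem IsCombBall.coneC {d : ℕ} {K : SComplex V} (hK : K.IsCombBall d) {w : V}
    (hw : ∀ σ ∈ K.faces, w ∉ σ) : (coneC w K).IsCombBall (d + 1) :=
  PLHomeo.coneC hK hw fun _ _ _ => exists_cone_subdivision_stdSimplexC

theorem IsCombSphereAux.coneC {d : ℕ} {K : SComplex V} (hK : K.IsCombSphereAux (d + 1)) {w : V}
    (hw : ∀ σ ∈ K.faces, w ∉ σ) : (coneC w K).IsCombBall d :=
  PLHomeo.coneC hK hw fun _ _ _ hL => ⟨_, hL.cone isGeomCone_boundaryC_stdSimplexC⟩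

theorem coneFaces_mono {w : V} {F G : Set (Finset V)} (h : F ⊆ G) :
    coneFaces w F ⊆ coneFaces w G :=
  Set.union_subset_union_left _ (Set.union_subset_union h (Set.image_mono h))

theorem mem_of_mem_coneFaces {w : V} {F : Set (Finset V)} {σ : Finset V}
    (hσ : σ ∈ coneFaces w F) (hw : w ∉ σ) : σ ∈ F := by
  rcases hσ with (hσ | ⟨τ, -, rfl⟩) | rfl
  exacts [hσ, absurd (mem_insert_self w τ) hw, absurd (mem_singleton_self w) hw]

namespace IsStarringAt

variable {r : ℤ} {M Mt D bD : SComplex V} {d : ℕ} {w : V}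

theorem faces_union_coneFaces (h : IsStarringAt r M Mt D bD d w) :
    Mt.faces ∪ coneFaces w D.faces = M.faces ∪ coneFaces w D.faces := by
  obtain ⟨-, -, -, ⟨hbD, -⟩, -, -, hMt⟩ := h
  ext σ
  have hbD' : σ ∈ coneFaces w bD.faces → σ ∈ coneFaces w D.faces := (coneFaces_mono hbD ·)
  have hD : σ ∈ D.faces → σ ∈ coneFaces w D.faces := (Or.inl <| Or.inl ·)
  simp only [hMt, Set.mem_union, Set.mem_sdiff, Set.mem_ofPred_eq]
  tauto

theorem faces_inter_coneFaces (h : IsStarringAt r M Mt D bD d w) :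
    Mt.faces ∩ coneFaces w D.faces = coneFaces w bD.faces := by
  obtain ⟨-, -, -, ⟨hbD, -⟩, -, hwM, hMt⟩ := h
  refine subset_antisymm ?_ fun σ hσ => ⟨hMt ▸ Or.inr hσ, coneFaces_mono hbD hσ⟩
  rintro σ ⟨hσ, hσD⟩
  rw [hMt] at hσ
  rcases hσ with ⟨hσM, hσ⟩ | hσ
  · have hσD' := mem_of_mem_coneFaces hσD (notMem_of_notMem_vertexSet hwM hσM)
    exact Or.inl (Or.inl (not_not.mp fun h => hσ ⟨hσD', h⟩))
  · exact hσ

end IsStarringAt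

end SComplex

/-- If `Mt` is obtained from `M` by `r`-starring a combinatorial
`d`-ball `D` (with boundary sphere `bD`) at the new vertex `w`, then `M` and `Mt` are
both subcomplexes of `N = M ∪ wD`, and `N` is obtained from `Mt` by an elementary PL
expansion of dimension `d + 1`: `N = Mt ∪ wD`, where `wD` is a combinatorial
`(d+1)`-ball and `Mt ∩ wD = w∂D` is a combinatorial `d`-ball. -/
theorem starring_gives_expansion {V : Type*} (r : ℤ) (d : ℕ)
    (M Mt N D bD : SComplex V) (w : V)
    (hball : D.IsCombBall d)
    (hsphere : bD.IsCombSphereAux (d + 1))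
    (hstar : SComplex.IsStarringAt r M Mt D bD d w)
    (hN : N.faces = M.faces ∪ SComplex.coneFaces w D.faces) :
    M.IsSubcomplex N ∧ Mt.IsSubcomplex N ∧
    (SComplex.coneC w D).IsCombBall (d + 1) ∧
    N.faces = Mt.faces ∪ (SComplex.coneC w D).faces ∧
    Mt.faces ∩ (SComplex.coneC w D).faces = (SComplex.coneC w bD).faces ∧
    (SComplex.coneC w bD).IsCombBall d := by
  obtain ⟨hDM, -, -, ⟨hbD, -⟩, -, hwM, -⟩ := id hstar
  have hwD : ∀ σ ∈ D.faces, w ∉ σ := fun σ hσ =>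
    SComplex.notMem_of_notMem_vertexSet hwM (hDM hσ)
  have hNMt : N.faces = Mt.faces ∪ (SComplex.coneC w D).faces :=
    hN.trans hstar.faces_union_coneFaces.symm
  exact ⟨fun σ hσ => hN ▸ Or.inl hσ, fun σ hσ => hNMt ▸ Or.inl hσ, hball.coneC hwD, hNMt,
    hstar.faces_inter_coneFaces, hsphere.coneC fun σ hσ => hwD σ (hbD hσ)⟩
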